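/- Claim inside the pumping lemma: assume ⟦A_max⟧ ≤ ⟦A_min⟧, let c be a context, t a term, P = Prod(c), R = Reach(t), and m a context. Then for every run ρ of A_max over m from p to p with p ∈ P ∩ R, and every run τ of A_min over m from q to q with q ∈ P ∩ R, one has weight(ρ) ≤ weight(τ). -/

import Mathlib

/-- A ranked alphabet: symbols with arities. -/
structure RankedAlphabet where
  symb : Type
  ar : symb → ℕ

/-- Terms (finite ranked trees) over a ranked alphabet. -/
inductive Term (A : RankedAlphabet) : Type where
  | node (a : A.symb) (ts : Fin (A.ar a) → Term A) : Term A

/-- Height of a term: length of the longest branch. -/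
def Term.height {A : RankedAlphabet} : Term A → ℕ
  | .node _ ts => Finset.univ.sup fun i => (ts i).height + 1

/-- Size of a term: number of nodes. -/
def Term.size {A : RankedAlphabet} : Term A → ℕ
  | .node _ ts => 1 + ∑ i, (ts i).size

/-- A nondeterministic tree automaton with real weights on transitions and final states. -/
structure WTA (A : RankedAlphabet) (Q : Type) where
  trans : (a : A.symb) → (Fin (A.ar a) → Q) → Q → Prop
  wt : (a : A.symb) → (Fin (A.ar a) → Q) → Q → ℝ
  final : Q → Prop
  fwt : Q → ℝ

/-- Runs of an automaton over a term, reaching a given state at the root. -/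
inductive RunOf {A : RankedAlphabet} {Q : Type} (M : WTA A Q) : Term A → Q → Type where
  | node (a : A.symb) (ts : Fin (A.ar a) → Term A) (qs : Fin (A.ar a) → Q) (q : Q)
      (hq : M.trans a qs q) (rs : ∀ i, RunOf M (ts i) (qs i)) : RunOf M (.node a ts) q

/-- The weight of a run: sum of the weights of the transitions used. -/
def RunOf.wt {A : RankedAlphabet} {Q : Type} {M : WTA A Q} :
    {t : Term A} → {q : Q} → RunOf M t q → ℝ
  | _, _, .node a _ qs q _ rs => (∑ i, (rs i).wt) + M.wt a qs q

/-- Contexts: terms with exactly one hole. -/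
inductive Ctx (A : RankedAlphabet) : Type where
  | hole : Ctx A
  | node (a : A.symb) (i : Fin (A.ar a)) (c : Ctx A) (ts : Fin (A.ar a) → Term A) : Ctx A

/-- Plugging a term into the hole of a context. -/
def Ctx.plug {A : RankedAlphabet} : Ctx A → Term A → Term A
  | .hole, t => t
  | .node a i c ts, t => .node a (Function.update ts i (c.plug t))

/-- Composition of contexts: plugging the second context into the hole of the first. -/
def Ctx.comp {A : RankedAlphabet} : Ctx A → Ctx A → Ctx A
  | .hole, d => d
  | .node a i c ts, d => .node a i (c.comp d) ts

/-- Iterated composition of a context with itself. -/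
def Ctx.pow {A : RankedAlphabet} (m : Ctx A) : ℕ → Ctx A
  | 0 => .hole
  | n + 1 => m.comp (m.pow n)

/-- Runs over a context, from a state (at the hole) to a state (at the root). -/
inductive CRun {A : RankedAlphabet} {Q : Type} (M : WTA A Q) : Ctx A → Q → Q → Type where
  | hole (p : Q) : CRun M .hole p p
  | node (a : A.symb) (i : Fin (A.ar a)) (c : Ctx A) (ts : Fin (A.ar a) → Term A)
      (qs : Fin (A.ar a) → Q) (p q : Q)
      (hq : M.trans a qs q)
      (hc : CRun M c p (qs i))
      (rs : ∀ j, j ≠ i → RunOf M (ts j) (qs j)) : CRun M (.node a i c ts) p q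

/-- The weight of a run over a context. -/
def CRun.wt {A : RankedAlphabet} {Q : Type} {M : WTA A Q} :
    {c : Ctx A} → {p q : Q} → CRun M c p q → ℝ
  | _, _, _, .hole _ => 0
  | _, _, _, .node a i _ _ qs _ q _ hc rs =>
      (∑ j : {j // j ≠ i}, (rs j.1 j.2).wt) + M.wt a qs q + hc.wt

/-- Gluing a run over a context with a run over a term yields a run over the plugged term. -/
def CRun.glue {A : RankedAlphabet} {Q : Type} {M : WTA A Q} {t : Term A} :
    {c : Ctx A} → {p q : Q} → CRun M c p q → RunOf M t p → RunOf M (c.plug t) q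
  | _, _, _, .hole _, r => r
  | _, _, _, .node a i c ts qs _ q hq hc rs, r =>
      .node a (Function.update ts i (c.plug t)) qs q hq
        (fun j =>
          if h : j = i then
            cast (by subst h; rw [Function.update_self]) (CRun.glue hc r)
          else
            cast (congrArg (fun s => RunOf M s (qs j))
              (Function.update_of_ne h (c.plug t) ts).symm) (rs j h))

/-- Gluing runs over composed contexts. -/
def CRun.cglue {A : RankedAlphabet} {Q : Type} {M : WTA A Q} {d : Ctx A} {p : Q} :
    {c : Ctx A} → {q r : Q} → CRun M c q r → CRun M d p q → CRun M (c.comp d) p r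
  | _, _, _, .hole _, rd => rd
  | _, _, _, .node a i c ts qs _ r hq hc rs, rd =>
      .node a i (c.comp d) ts qs p r hq (hc.cglue rd) rs

/-- The `n`-fold iteration of a loop run over a context. -/
def CRun.pow {A : RankedAlphabet} {Q : Type} {M : WTA A Q} {m : Ctx A} {q : Q}
    (σ : CRun M m q q) : (n : ℕ) → CRun M (m.pow n) q q
  | 0 => .hole q
  | n + 1 => σ.cglue (σ.pow n)

/-- `x` is the weight of some accepting run of `M` over `t`
(weight of the run plus the final-state weight). -/
def AccWeight {A : RankedAlphabet} {Q : Type} (M : WTA A Q) (t : Term A) (x : ℝ) : Prop :=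
  ∃ (q : Q) (r : RunOf M t q), M.final q ∧ r.wt + M.fwt q = x

/-- `M` has some accepting run over `t`. -/
def HasAcc {A : RankedAlphabet} {Q : Type} (M : WTA A Q) (t : Term A) : Prop :=
  ∃ x, AccWeight M t x

/-- `f` is the max-plus semantics of `M`: `f t = ⊥` iff there is no accepting run,
and otherwise `f t` is the maximum weight of an accepting run. -/
def ComputesMax {A : RankedAlphabet} {Q : Type} (M : WTA A Q) (f : Term A → Option ℝ) : Prop :=
  ∀ t, (f t = none ↔ ¬ HasAcc M t) ∧
    ∀ x, f t = some x → AccWeight M t x ∧ ∀ y, AccWeight M t y → y ≤ x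

/-- `f` is the min-plus semantics of `M`. -/
def ComputesMin {A : RankedAlphabet} {Q : Type} (M : WTA A Q) (f : Term A → Option ℝ) : Prop :=
  ∀ t, (f t = none ↔ ¬ HasAcc M t) ∧
    ∀ x, f t = some x → AccWeight M t x ∧ ∀ y, AccWeight M t y → x ≤ y

/-- An automaton is unambiguous if every term has at most one accepting run. -/
def Unambiguous {A : RankedAlphabet} {Q : Type} (M : WTA A Q) : Prop :=
  ∀ (t : Term A) (q q' : Q) (r : RunOf M t q) (r' : RunOf M t q'),
    M.final q → M.final q' → q = q' ∧ HEq r r'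

/-- The order on `ℝ ∪ {⊥}` in which `⊥` is comparable only with itself. -/
def OLe : Option ℝ → Option ℝ → Prop
  | none, none => True
  | some x, some y => x ≤ y
  | _, _ => False

/-- Shifting a value of `ℝ ∪ {⊥}` by a real number. -/
def oshift (u : Option ℝ) (x : ℝ) : Option ℝ := u.map (· + x)

/-- The set of states reachable at the root by some run over `t`. -/
def reachSet {A : RankedAlphabet} {Q : Type} (M : WTA A Q) (t : Term A) : Set Q :=
  {q | Nonempty (RunOf M t q)}

/-- The set of states at the hole from which there is an accepting run over the context `c`. -/
def prodSet {A : RankedAlphabet} {Q : Type} (M : WTA A Q) (c : Ctx A) : Set Q :=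
  {p | ∃ q, M.final q ∧ Nonempty (CRun M c p q)}

section Bi
variable {A : RankedAlphabet} {Q1 Q2 : Type} (M1 : WTA A Q1) (M2 : WTA A Q2)

/-- Reachable states of the disjoint union of the two automata. -/
def biReach (t : Term A) : Set (Q1 ⊕ Q2) :=
  Sum.inl '' reachSet M1 t ∪ Sum.inr '' reachSet M2 t

/-- Productive states of the disjoint union of the two automata. -/
def biProd (c : Ctx A) : Set (Q1 ⊕ Q2) :=
  Sum.inl '' prodSet M1 c ∪ Sum.inr '' prodSet M2 c

/-- Final states of the disjoint union of the two automata. -/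
def biFinal : Set (Q1 ⊕ Q2) :=
  Sum.inl '' {q | M1.final q} ∪ Sum.inr '' {q | M2.final q}

/-- Transition relation of the disjoint union of the two automata. -/
def biTrans (a : A.symb) (qs : Fin (A.ar a) → Q1 ⊕ Q2) (q : Q1 ⊕ Q2) : Prop :=
  (∃ (qs' : Fin (A.ar a) → Q1) (q' : Q1),
      qs = Sum.inl ∘ qs' ∧ q = Sum.inl q' ∧ M1.trans a qs' q') ∨
  (∃ (qs' : Fin (A.ar a) → Q2) (q' : Q2),
      qs = Sum.inr ∘ qs' ∧ q = Sum.inr q' ∧ M2.trans a qs' q')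

/-- The family `Reachable` of sets of states of the form `Reach(t)`. -/
def ReachableSets : Set (Set (Q1 ⊕ Q2)) := {S | ∃ t, biReach M1 M2 t = S}

/-- The family `Productive` of sets of states of the form `Prod(c)`. -/
def ProductiveSets : Set (Set (Q1 ⊕ Q2)) := {S | ∃ c, biProd M1 M2 c = S}

/-- `t` refines `s` for `P` with shift `x`. -/
def Refines (P : Set (Q1 ⊕ Q2)) (t s : Term A) (x : ℝ) : Prop :=
  biReach M1 M2 s = biReach M1 M2 t ∧
  (∀ p : Q1, Sum.inl p ∈ P → ∀ ρ : RunOf M1 s p, ∃ ρ' : RunOf M1 t p, ρ.wt ≤ ρ'.wt + x) ∧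
  (∀ q : Q2, Sum.inr q ∈ P → ∀ τ : RunOf M2 s q, ∃ τ' : RunOf M2 t q, τ'.wt + x ≤ τ.wt)

end Bi

/-- Transitions of the product automaton `A_pro`, relative to a transition relation `Δ`. -/
def ProTrans {A : RankedAlphabet} {Q : Type}
    (Δ : ∀ a : A.symb, (Fin (A.ar a) → Q) → Q → Prop) (a : A.symb)
    (RPs : Fin (A.ar a) → Set Q × Set Q) (RP : Set Q × Set Q) : Prop :=
  RP.1 = {r | ∃ rs, Δ a rs r ∧ ∀ j, rs j ∈ (RPs j).1} ∧
  ∀ i, (RPs i).2 =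
    {ri | ∃ rs p, Δ a rs p ∧ rs i = ri ∧ (∀ j, j ≠ i → rs j ∈ (RPs j).1) ∧ p ∈ RP.2}

/-!
Gluing an accepting run over `c`, the `n`-fold iterate of a loop over `m`, and a run over `t`
gives accepting runs of both automata over `c[mⁿ[t]]`, of weights `n * ρ.wt + a` and
`n * τ.wt + b` with `a`, `b` independent of `n`. Since `⟦A_max⟧ ≤ ⟦A_min⟧`, the first is at most
the second for every `n`, which forces `ρ.wt ≤ τ.wt`.
-/

theorem RunOf.wt_cast {A : RankedAlphabet} {Q : Type} {M : WTA A Q} {t t' : Term A} {q : Q}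
    (ht : t = t') (h : RunOf M t q = RunOf M t' q) (r : RunOf M t q) :
    (cast h r).wt = r.wt := by
  subst ht; rfl

namespace CRun

variable {A : RankedAlphabet} {Q : Type} {M : WTA A Q}

theorem glue_wt {t : Term A} :
    ∀ {c : Ctx A} {p q : Q} (σ : CRun M c p q) (r : RunOf M t p),
      (σ.glue r).wt = σ.wt + r.wt
  | _, _, _, .hole _, r => (zero_add r.wt).symm
  | _, _, _, .node a i c ts qs p q hq hc rs, r => by
      set child := fun j => if h : j = i then
          cast (by subst h; rw [Function.update_self]) (hc.glue r)
        else
          cast (congrArg (fun s => RunOf M s (qs j))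
            (Function.update_of_ne h (c.plug t) ts).symm) (rs j h)
      have hchild_self : (child i).wt = hc.wt + r.wt := by
        simp only [child, dite_true]
        rw [RunOf.wt_cast (Function.update_self i (c.plug t) ts).symm, glue_wt hc r]
      have hchild_ne (j : {j // j ≠ i}) : (child j.1).wt = (rs j.1 j.2).wt := by
        simp only [child, dif_neg j.2]
        exact RunOf.wt_cast (Function.update_of_ne j.2 (c.plug t) ts).symm _ _
      change (∑ j, (child j).wt) + M.wt a qs q =
        (∑ j : {j // j ≠ i}, (rs j.1 j.2).wt) + M.wt a qs q + hc.wt + r.wt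
      rw [Fintype.sum_eq_add_sum_subtype_ne _ i, hchild_self, Fintype.sum_congr _ _ hchild_ne]
      ring

theorem cglue_wt {d : Ctx A} {p : Q} :
    ∀ {c : Ctx A} {q r : Q} (σ : CRun M c q r) (rd : CRun M d p q),
      (σ.cglue rd).wt = σ.wt + rd.wt
  | _, _, _, .hole _, rd => (zero_add rd.wt).symm
  | _, _, _, .node a i c ts qs q r hq hc rs, rd => by
      change _ + M.wt a qs r + (hc.cglue rd).wt = _ + M.wt a qs r + hc.wt + rd.wt
      rw [cglue_wt hc rd]
      ring

theorem pow_wt {m : Ctx A} {q : Q} (σ : CRun M m q q) (n : ℕ) :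
    (σ.pow n).wt = n * σ.wt := by
  induction n with
  | zero => simp [CRun.pow, CRun.wt]
  | succ k ih =>
    change (σ.cglue (σ.pow k)).wt = _
    rw [cglue_wt, ih]
    push_cast
    ring

end CRun

section Semantics

variable {A : RankedAlphabet} {Q : Type} {M : WTA A Q}

theorem accWeight_plug_pow_plug {c m : Ctx A} {t : Term A} {p qf : Q} (hqf : M.final qf)
    (κ : CRun M c p qf) (σ : CRun M m p p) (r : RunOf M t p) (n : ℕ) :
    AccWeight M (c.plug ((m.pow n).plug t)) (n * σ.wt + (κ.wt + r.wt + M.fwt qf)) :=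
  ⟨qf, κ.glue ((σ.pow n).glue r), hqf, by
    rw [CRun.glue_wt, CRun.glue_wt, CRun.pow_wt]; ring⟩

theorem ComputesMax.exists_eq_some_le {f : Term A → Option ℝ} (hf : ComputesMax M f)
    {t : Term A} {y : ℝ} (hy : AccWeight M t y) : ∃ x, f t = some x ∧ y ≤ x := by
  rcases hft : f t with _ | x
  · exact absurd ⟨y, hy⟩ ((hf t).1.mp hft)
  · exact ⟨x, rfl, ((hf t).2 x hft).2 y hy⟩

theorem ComputesMin.exists_eq_some_ge {g : Term A → Option ℝ} (hg : ComputesMin M g)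
    {t : Term A} {y : ℝ} (hy : AccWeight M t y) : ∃ x, g t = some x ∧ x ≤ y := by
  rcases hgt : g t with _ | x
  · exact absurd ⟨y, hy⟩ ((hg t).1.mp hgt)
  · exact ⟨x, rfl, ((hg t).2 x hgt).2 y hy⟩

end Semantics

theorem accWeight_le_of_oLe {A : RankedAlphabet} {Q1 Q2 : Type}
    {Mmax : WTA A Q1} {Mmin : WTA A Q2} {f g : Term A → Option ℝ}
    (hf : ComputesMax Mmax f) (hg : ComputesMin Mmin g) {u : Term A} (hle : OLe (f u) (g u))
    {x y : ℝ} (hx : AccWeight Mmax u x) (hy : AccWeight Mmin u y) : x ≤ y := by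
  obtain ⟨x', hfu, hxx'⟩ := hf.exists_eq_some_le hx
  obtain ⟨y', hgu, hy'y⟩ := hg.exists_eq_some_ge hy
  rw [hfu, hgu] at hle
  exact hxx'.trans (hle.trans hy'y)

section BiStates

variable {A : RankedAlphabet} {Q1 Q2 : Type} {M1 : WTA A Q1} {M2 : WTA A Q2}

@[simp]
theorem inl_mem_biProd {c : Ctx A} {p : Q1} : Sum.inl p ∈ biProd M1 M2 c ↔ p ∈ prodSet M1 c := by
  simp [biProd]

@[simp]
theorem inr_mem_biProd {c : Ctx A} {q : Q2} : Sum.inr q ∈ biProd M1 M2 c ↔ q ∈ prodSet M2 c := by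
  simp [biProd]

@[simp]
theorem inl_mem_biReach {t : Term A} {p : Q1} :
    Sum.inl p ∈ biReach M1 M2 t ↔ p ∈ reachSet M1 t := by
  simp [biReach]

@[simp]
theorem inr_mem_biReach {t : Term A} {q : Q2} :
    Sum.inr q ∈ biReach M1 M2 t ↔ q ∈ reachSet M2 t := by
  simp [biReach]

end BiStates

theorem le_of_forall_natCast_mul_add_le {x y a b : ℝ} (h : ∀ n : ℕ, n * x + a ≤ n * y + b) :
    x ≤ y := by
  by_contra! hxy
  obtain ⟨n, hn⟩ := exists_nat_gt ((b - a) / (x - y))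
  have := h n
  rw [div_lt_iff₀ (sub_pos.mpr hxy)] at hn
  nlinarith

theorem pumping_claim_general {A : RankedAlphabet} {Q1 Q2 : Type}
    (Mmax : WTA A Q1) (Mmin : WTA A Q2)
    (f g : Term A → Option ℝ)
    (hf : ComputesMax Mmax f) (hg : ComputesMin Mmin g)
    (hle : ∀ u, OLe (f u) (g u))
    (c : Ctx A) (t : Term A) (m : Ctx A)
    (p : Q1) (hp : Sum.inl p ∈ biProd Mmax Mmin c ∩ biReach Mmax Mmin t)
    (q : Q2) (hq : Sum.inr q ∈ biProd Mmax Mmin c ∩ biReach Mmax Mmin t)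
    (ρ : CRun Mmax m p p) (τ : CRun Mmin m q q) :
    ρ.wt ≤ τ.wt := by
  simp only [Set.mem_inter_iff, inl_mem_biProd, inl_mem_biReach, inr_mem_biProd,
    inr_mem_biReach] at hp hq
  obtain ⟨⟨pf, hpf, ⟨κ⟩⟩, ⟨r⟩⟩ := hp
  obtain ⟨⟨qf, hqf, ⟨κ'⟩⟩, ⟨r'⟩⟩ := hq
  exact le_of_forall_natCast_mul_add_le fun n => accWeight_le_of_oLe hf hg (hle _)
    (accWeight_plug_pow_plug hpf κ ρ r n) (accWeight_plug_pow_plug hqf κ' τ r' n)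

/-- claim inside the pumping lemma: assuming `⟦A_max⟧ ≤ ⟦A_min⟧`, with
`P = Prod(c)` and `R = Reach(t)`, every max-plus loop run over `m` at a state of `P ∩ R`
has weight at most that of every min-plus loop run over `m` at a state of `P ∩ R`. -/
theorem pumping_claim {A : RankedAlphabet} {Q1 Q2 : Type}
    [Fintype Q1] [Fintype Q2] (Mmax : WTA A Q1) (Mmin : WTA A Q2)
    (f g : Term A → Option ℝ)
    (hf : ComputesMax Mmax f) (hg : ComputesMin Mmin g)
    (hle : ∀ u, OLe (f u) (g u))
    (c : Ctx A) (t : Term A) (m : Ctx A)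
    (p : Q1) (hp : Sum.inl p ∈ biProd Mmax Mmin c ∩ biReach Mmax Mmin t)
    (q : Q2) (hq : Sum.inr q ∈ biProd Mmax Mmin c ∩ biReach Mmax Mmin t)
    (ρ : CRun Mmax m p p) (τ : CRun Mmin m q q) :
    ρ.wt ≤ τ.wt :=
  pumping_claim_general Mmax Mmin f g hf hg hle c t m p hp q hq ρ τ
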